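/- For every integer q ≥ 3 and every real t with 0 < t < 1, β^{q−2}(t) < (1 − t²)^{(q/2)−1} / (t·√(2π(q−2))). -/

import Mathlib

open MeasureTheory Filter

/-- `betaCap q t` is the normalized surface area `β^{q-2}(t)` of a spherical cap of angular
half-width `arccos t` on a `(q-2)`-dimensional sphere. -/
noncomputable def betaCap (q : ℕ) (t : ℝ) : ℝ :=
  (Real.Gamma (((q : ℝ) - 1) / 2) / (Real.Gamma (1 / 2) * Real.Gamma (((q : ℝ) - 2) / 2))) *
    ∫ v in t..1, (1 - v ^ 2) ^ ((q : ℝ) / 2 - 2)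

lemma aux_integrable {a t : ℝ} (ha : -1 < a) (ht0 : 0 < t) (ht1 : t < 1)
    {g : ℝ → ℝ} (hg : ContinuousOn g (Set.Icc t 1)) :
    IntervalIntegrable (fun v => g v * (1 - v ^ 2) ^ a) volume t 1 := by
  have h1 : IntervalIntegrable (fun x : ℝ => x ^ a) volume 0 (1 - t) :=
    intervalIntegral.intervalIntegrable_rpow' ha
  have h2 : IntervalIntegrable (fun v : ℝ => (1 - v) ^ a) volume t 1 := by
    simpa using (h1.comp_sub_left 1).symm
  have hcont : ContinuousOn (fun v : ℝ => (1 + v) ^ a * g v) (Set.uIcc t 1) := by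
    rw [Set.uIcc_of_le ht1.le]
    refine ContinuousOn.mul (ContinuousOn.rpow_const (by fun_prop) ?_) hg
    intro x hx
    exact Or.inl (by nlinarith [hx.1])
  have h3 := h2.mul_continuousOn hcont
  apply h3.congr
  rw [Set.uIoc_of_le ht1.le]
  intro v hv
  dsimp only
  have h1v : (0:ℝ) ≤ 1 - v := by linarith [hv.2]
  have h2v : (0:ℝ) ≤ 1 + v := by linarith [hv.1]
  have hsq : (1 : ℝ) - v ^ 2 = (1 - v) * (1 + v) := by ring
  rw [hsq, Real.mul_rpow h1v h2v]
  ring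

lemma aux_integral {a t : ℝ} (ha : -1 < a) (ht0 : 0 < t) (ht1 : t < 1) :
    ∫ v in t..1, v * (1 - v ^ 2) ^ a = (1 - t ^ 2) ^ (a + 1) / (2 * (a + 1)) := by
  have ha1 : 0 < a + 1 := by linarith
  set F : ℝ → ℝ := fun v => -((1 - v ^ 2) ^ (a + 1)) / (2 * (a + 1)) with hF
  have hcont : ContinuousOn F (Set.Icc t 1) := by
    apply ContinuousOn.div_const
    apply ContinuousOn.neg
    exact ContinuousOn.rpow_const (by fun_prop) (fun x _ => Or.inr ha1.le)
  have hderiv : ∀ x ∈ Set.Ioo t 1, HasDerivWithinAt F (x * (1 - x ^ 2) ^ a) (Set.Ioi x) x := by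
    intro x hx
    have hx1 : (0:ℝ) < 1 - x ^ 2 := by nlinarith [hx.1, hx.2, ht0]
    have h1 : HasDerivAt (fun v : ℝ => 1 - v ^ 2) (-(2 * x)) x := by
      simpa using ((hasDerivAt_pow 2 x).const_sub 1)
    have h2 := (h1.rpow_const (p := a + 1) (Or.inl hx1.ne')).neg.div_const (2 * (a + 1))
    convert h2.hasDerivWithinAt using 1
    any_goals rfl
    rw [add_sub_cancel_right]
    field_simp
  have hint : IntervalIntegrable (fun v => v * (1 - v ^ 2) ^ a) volume t 1 :=
    aux_integrable ha ht0 ht1 continuousOn_id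
  rw [intervalIntegral.integral_eq_sub_of_hasDeriv_right_of_le ht1.le hcont hderiv hint]
  simp only [hF]
  rw [one_pow, sub_self, Real.zero_rpow (by linarith : a + 1 ≠ 0)]
  ring

lemma gamma_half_le {x : ℝ} (hx : 0 < x) :
    Real.Gamma (x + 1 / 2) ≤ Real.sqrt x * Real.Gamma x := by
  have h := Real.Gamma_mul_add_mul_le_rpow_Gamma_mul_rpow_Gamma hx
    (by linarith : (0:ℝ) < x + 1) one_half_pos one_half_pos (by norm_num)
  have e1 : (1/2 : ℝ) * x + (1/2 : ℝ) * (x + 1) = x + 1/2 := by ring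
  rw [e1, Real.Gamma_add_one hx.ne'] at h
  have hΓ : 0 < Real.Gamma x := Real.Gamma_pos_of_pos hx
  calc Real.Gamma (x + 1/2) ≤ Real.Gamma x ^ (1/2:ℝ) * (x * Real.Gamma x) ^ (1/2:ℝ) := h
    _ = Real.sqrt x * Real.Gamma x := by
        rw [Real.mul_rpow hx.le hΓ.le, ← Real.sqrt_eq_rpow, ← Real.sqrt_eq_rpow,
          mul_comm (Real.sqrt (Real.Gamma x)), mul_assoc,
          Real.mul_self_sqrt hΓ.le]

/-- The bound (15): for `q ≥ 3` and `0 < t < 1`,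
`β^{q-2}(t) < (1 - t²)^{q/2 - 1} / (t √(2π(q-2)))`. -/
theorem stmt1 (q : ℕ) (hq : 3 ≤ q) (t : ℝ) (ht0 : 0 < t) (ht1 : t < 1) :
    betaCap q t <
      (1 - t ^ 2) ^ ((q : ℝ) / 2 - 1) / (t * Real.sqrt (2 * Real.pi * ((q : ℝ) - 2))) := by
  have hq3 : (3:ℝ) ≤ (q:ℝ) := by exact_mod_cast hq
  have ha : -1 < (q:ℝ)/2 - 2 := by linarith
  have ha1 : 0 < ((q:ℝ)/2 - 2) + 1 := by linarith
  have hq2 : (0:ℝ) < (q:ℝ) - 2 := by linarith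
  have hX : (0:ℝ) < 1 - t ^ 2 := by nlinarith
  set a : ℝ := (q:ℝ)/2 - 2 with ha_def
  set X : ℝ := (1 - t ^ 2) ^ (a + 1) with hX_def
  have hXpos : 0 < X := Real.rpow_pos_of_pos hX _
  set S : ℝ := Real.sqrt (2 * Real.pi * ((q:ℝ) - 2)) with hS_def
  have hSpos : 0 < S := Real.sqrt_pos.mpr (by positivity)
  have hint1 : IntervalIntegrable (fun v => (1 - v^2)^a) volume t 1 := by
    simpa using aux_integrable ha ht0 ht1 (g := fun _ => 1) continuousOn_const
  have hint2 : IntervalIntegrable (fun v => v * (1 - v^2)^a) volume t 1 :=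
    aux_integrable ha ht0 ht1 continuousOn_id
  have hI2 : ∫ v in t..1, v * (1 - v^2)^a = X / (2*(a+1)) := aux_integral ha ht0 ht1
  -- strict integral bound
  have hlt : ∫ v in t..1, (1 - v^2)^a < (1/t) * (X / (2*(a+1))) := by
    rw [← hI2]
    have hpos : 0 < ∫ v in t..1, ((1/t) * (v * (1 - v^2)^a) - (1 - v^2)^a) := by
      apply intervalIntegral.intervalIntegral_pos_of_pos_on
        ((hint2.const_mul _).sub hint1) _ ht1
      intro x hx
      have h1 : 0 < (1 - x^2)^a := Real.rpow_pos_of_pos (by nlinarith [hx.1, hx.2]) a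
      have h2 : 1 < (1/t) * x := by
        rw [one_div, inv_mul_eq_div]
        exact (one_lt_div ht0).mpr hx.1
      nlinarith [mul_pos (sub_pos.mpr h2) h1]
    rw [intervalIntegral.integral_sub (hint2.const_mul _) hint1,
      intervalIntegral.integral_const_mul] at hpos
    linarith
  -- the Gamma constant
  set C : ℝ := Real.Gamma (((q:ℝ) - 1)/2) / (Real.Gamma (1/2) * Real.Gamma (((q:ℝ) - 2)/2))
    with hC_def
  have hΓ2 : 0 < Real.Gamma (((q:ℝ) - 2)/2) := Real.Gamma_pos_of_pos (by linarith)
  have hΓ1 : 0 < Real.Gamma (((q:ℝ) - 1)/2) := Real.Gamma_pos_of_pos (by linarith)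
  have hCpos : 0 < C := by
    rw [hC_def, Real.Gamma_one_half_eq]
    have := Real.sqrt_pos.mpr Real.pi_pos
    positivity
  have hCle : C ≤ ((q:ℝ) - 2) / S := by
    have hxpos : (0:ℝ) < ((q:ℝ) - 2)/2 := by linarith
    have hΓle : Real.Gamma (((q:ℝ) - 1)/2)
        ≤ Real.sqrt (((q:ℝ) - 2)/2) * Real.Gamma (((q:ℝ) - 2)/2) := by
      have := gamma_half_le hxpos
      rw [show ((q:ℝ) - 2)/2 + 1/2 = ((q:ℝ) - 1)/2 by ring] at this
      exact this
    have hsπ : (0:ℝ) < Real.sqrt Real.pi := Real.sqrt_pos.mpr Real.pi_pos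
    have key : Real.sqrt (((q:ℝ) - 2)/2) / Real.sqrt Real.pi = ((q:ℝ) - 2) / S := by
      rw [eq_div_iff hSpos.ne', div_mul_eq_mul_div, hS_def,
        ← Real.sqrt_mul (by positivity : (0:ℝ) ≤ ((q:ℝ) - 2)/2),
        show ((q:ℝ) - 2)/2 * (2 * Real.pi * ((q:ℝ) - 2)) = ((q:ℝ) - 2)^2 * Real.pi by ring,
        Real.sqrt_mul (by positivity), Real.sqrt_sq hq2.le, mul_div_assoc,
        div_self hsπ.ne', mul_one]
    calc C = Real.Gamma (((q:ℝ) - 1)/2) / (Real.sqrt Real.pi * Real.Gamma (((q:ℝ) - 2)/2)) := by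
            rw [hC_def, Real.Gamma_one_half_eq]
      _ ≤ Real.sqrt (((q:ℝ) - 2)/2) * Real.Gamma (((q:ℝ) - 2)/2)
            / (Real.sqrt Real.pi * Real.Gamma (((q:ℝ) - 2)/2)) := by
            apply div_le_div_of_nonneg_right hΓle (by positivity) |>.trans_eq rfl
      _ = Real.sqrt (((q:ℝ) - 2)/2) / Real.sqrt Real.pi := by
            rw [mul_comm (Real.sqrt Real.pi), ← div_div, mul_div_assoc,
              div_self hΓ2.ne', mul_one]
      _ = ((q:ℝ) - 2) / S := key
  have hbeta : betaCap q t = C * ∫ v in t..1, (1 - v^2)^a := rfl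
  have step1 : betaCap q t < C * ((1/t) * (X / (2*(a+1)))) := by
    rw [hbeta]
    exact mul_lt_mul_of_pos_left hlt hCpos
  have h2a1 : 2*(a+1) = (q:ℝ) - 2 := by rw [ha_def]; ring
  have step2 : C * ((1/t) * (X / (2*(a+1)))) ≤ X / (t * S) := by
    rw [h2a1]
    calc C * ((1/t) * (X / ((q:ℝ) - 2)))
        ≤ (((q:ℝ) - 2) / S) * ((1/t) * (X / ((q:ℝ) - 2))) := by
          apply mul_le_mul_of_nonneg_right hCle (by positivity)
      _ = X / (t * S) := by field_simp
  have hexp : ((q:ℝ)/2 - 1) = a + 1 := by rw [ha_def]; ring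
  rw [hexp]
  exact step1.trans_le step2
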